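/- In the set cover problem with sets S_1, ..., S_n ⊆ E, nonnegative costs c(i), and dual variables y : E → ℝ≥0 satisfying Σ_{e ∈ S_i} y(e) ≤ c(i) for all i (dual feasibility), any collection I of indices such that every i ∈ I is tight (Σ_{e ∈ S_i} y(e) = c(i)) and ∪_{i ∈ I} S_i = E satisfies Σ_{i ∈ I} c(i) ≤ f · Σ_{e ∈ E} y(e) ≤ f · OPT, where f = max_{e ∈ E} |{i : e ∈ S_i}| and OPT is the minimum cost of any set cover. -/

import Mathlib

/-!
Both inequalities come from exchanging the order of summation: `∑ i ∈ J, ∑ e ∈ S i, y e`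
counts each `y e` once for every `i ∈ J` with `e ∈ S i`. For the tight sets `I` this
multiplicity is at most `f`; for a cover `C` it is at least `1`, which together with dual
feasibility is weak LP duality.
-/

open Finset

namespace Finset

variable {U ι M : Type*} [Fintype U] [DecidableEq U] [AddCommMonoid M] (S : ι → Finset U)

theorem sum_sum_eq_sum_card_filter_nsmul (J : Finset ι) (y : U → M) :
    ∑ i ∈ J, ∑ e ∈ S i, y e = ∑ e, #{i ∈ J | e ∈ S i} • y e := by
  simp_rw [← sum_const]
  exact sum_comm' fun i e ↦ by simp

variable [PartialOrder M] [IsOrderedAddMonoid M] {S} {y : U → M}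

theorem sum_sum_le_nsmul_sum_of_card_filter_le (hy : ∀ e, 0 ≤ y e) {J : Finset ι} {f : ℕ}
    (hf : ∀ e, #{i ∈ J | e ∈ S i} ≤ f) :
    ∑ i ∈ J, ∑ e ∈ S i, y e ≤ f • ∑ e, y e := by
  rw [sum_sum_eq_sum_card_filter_nsmul, smul_sum]
  exact sum_le_sum fun e _ ↦ nsmul_le_nsmul_left (hy e) (hf e)

theorem sum_le_sum_sum_of_forall_exists_mem (hy : ∀ e, 0 ≤ y e) {C : Finset ι}
    (hC : ∀ e, ∃ i ∈ C, e ∈ S i) :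
    ∑ e, y e ≤ ∑ i ∈ C, ∑ e ∈ S i, y e := by
  rw [sum_sum_eq_sum_card_filter_nsmul]
  gcongr with e
  obtain ⟨i, hi, he⟩ := hC e
  have hcovered : 1 ≤ #{i ∈ C | e ∈ S i} := card_pos.mpr ⟨i, mem_filter.mpr ⟨hi, he⟩⟩
  simpa using nsmul_le_nsmul_left (hy e) hcovered

end Finset

theorem set_cover_primal_dual_bound {U ι : Type*} [Fintype U] [Fintype ι] [DecidableEq U]
    (S : ι → Finset U) (c : ι → ℝ)
    (y : U → ℝ) (hy : ∀ e, 0 ≤ y e)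
    (hfeas : ∀ i, ∑ e ∈ S i, y e ≤ c i)
    (I : Finset ι)
    (htight : ∀ i ∈ I, ∑ e ∈ S i, y e = c i)
    (f : ℕ)
    (hf : f = Finset.univ.sup fun e : U => (Finset.univ.filter fun i : ι => e ∈ S i).card) :
    ∑ i ∈ I, c i ≤ (f : ℝ) * ∑ e : U, y e ∧
    ∀ C : Finset ι, (∀ e : U, ∃ i ∈ C, e ∈ S i) →
      (f : ℝ) * ∑ e : U, y e ≤ (f : ℝ) * ∑ i ∈ C, c i := by
  refine ⟨?_, fun C hC ↦ ?_⟩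
  · have hfreq (e : U) : #{i ∈ I | e ∈ S i} ≤ f := hf ▸
      (card_le_card (filter_subset_filter _ (subset_univ I))).trans
        (le_sup (f := fun e ↦ #{i | e ∈ S i}) (mem_univ e))
    rw [← sum_congr rfl htight, ← nsmul_eq_mul]
    exact sum_sum_le_nsmul_sum_of_card_filter_le hy hfreq
  · gcongr
    exact (sum_le_sum_sum_of_forall_exists_mem hy hC).trans (sum_le_sum fun i _ ↦ hfeas i)
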